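/- Along the family ρ ↦ (r,p_r,p_θ) = (ρ, 0, ±ρ²√(2(1−ρ²))) of relative equilibria of the axisymmetric volcano system, the point ρ = √(2/3) is a critical point of the energy E(ρ) = H₀ restricted to this family, and it is a nondegenerate maximum of E; moreover for ρ ∈ (√(2/3), 1] the linearization of the reduced (r,p_r) dynamics at the relative equilibrium has a positive real eigenvalue (hyperbolic), while for ρ ∈ (0, √(2/3)) the eigenvalues are purely imaginary (elliptic). -/

import Mathlib

/-!
Substituting `μ² = 2ρ⁴(1 − ρ²)` turns the energy into the polynomial `E(ρ) = 2ρ² − (3/2)ρ⁴`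
and the stiffness into `U_μ''(ρ) = 8 − 12ρ²`; both change behaviour at `ρ² = 2/3`, where
`E' = 4ρ − 6ρ³` vanishes and `2/3 − E(ρ) = (3/2)(ρ² − 2/3)²`. The linearization
`[[0, 1], [−k, 0]]` has eigenvalues `λ` with `λ² = −k`: real and positive ones exist when
`k < 0`, and only purely imaginary ones when `k > 0`.
-/

open Real

namespace Stmt7

/-- Energy along the family of relative equilibria `ρ ↦ (ρ, 0, ±ρ²√(2(1−ρ²)))`:
`E(ρ) = (1/2)μ(ρ)²/ρ² + (1/2)ρ²(2−ρ²)` with `μ(ρ)² = 2ρ⁴(1−ρ²)`. -/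
noncomputable def Efam (ρ : ℝ) : ℝ :=
  1 / 2 * (2 * ρ ^ 4 * (1 - ρ ^ 2)) / ρ ^ 2 + 1 / 2 * ρ ^ 2 * (2 - ρ ^ 2)

/-- Second derivative `U_μ''(ρ)` of the effective potential
`U_μ(r) = μ²/(2r²) + (1/2)r²(2−r²)` at the relative equilibrium, where
`μ² = 2ρ⁴(1−ρ²)`. -/
noncomputable def Upp (ρ : ℝ) : ℝ :=
  3 * (2 * ρ ^ 4 * (1 - ρ ^ 2)) / ρ ^ 4 + 2 - 6 * ρ ^ 2

end Stmt7

open Stmt7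

section Oscillator

open Matrix

variable {R : Type*} [CommRing R]

theorem mulVec_oscillator_eq_smul_of_sq_eq {k lam : R} (h : lam ^ 2 = -k) :
    !![0, 1; -k, 0] *ᵥ ![1, lam] = lam • ![1, lam] := by
  ext i
  fin_cases i <;> simp [Matrix.mulVec, dotProduct, Fin.sum_univ_two, ← h, sq]

theorem sq_eq_neg_of_mulVec_oscillator_eq_smul [IsDomain R] {k lam : R} {v : Fin 2 → R}
    (hv : v ≠ 0) (h : !![0, 1; -k, 0] *ᵥ v = lam • v) : lam ^ 2 = -k := by
  have h0 : v 1 = lam * v 0 := by simpa [Matrix.mulVec, dotProduct] using congrFun h 0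
  have h1 : -k * v 0 = lam * v 1 := by simpa [Matrix.mulVec, dotProduct] using congrFun h 1
  have hv0 : v 0 ≠ 0 := by
    intro hz
    apply hv
    ext i
    fin_cases i
    · exact hz
    · simpa [hz] using h0
  refine mul_right_cancel₀ hv0 ?_
  linear_combination -lam * h0 - h1

end Oscillator

theorem Complex.re_eq_zero_of_sq_eq_neg_ofReal {z : ℂ} {k : ℝ} (hk : 0 < k) (h : z ^ 2 = -k) :
    z.re = 0 := by
  have hre : z.re ^ 2 - z.im ^ 2 = -k := by
    simpa [sq, Complex.mul_re] using congrArg Complex.re h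
  have him : z.re * z.im = 0 := by
    have := congrArg Complex.im h
    simp only [sq, Complex.mul_im, Complex.neg_im, Complex.ofReal_im, neg_zero] at this
    linarith
  rcases mul_eq_zero.mp him with h | h
  · exact h
  · nlinarith [sq_nonneg z.re]

namespace Stmt7

theorem Efam_eq : Efam = fun ρ => 2 * ρ ^ 2 - 3 / 2 * ρ ^ 4 := by
  funext ρ
  rcases eq_or_ne ρ 0 with rfl | hρ
  · simp [Efam]
  · rw [Efam]
    field_simp
    ring

theorem Upp_eq {ρ : ℝ} (hρ : ρ ≠ 0) : Upp ρ = 8 - 12 * ρ ^ 2 := by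
  rw [Upp]
  field_simp
  ring

theorem deriv_Efam : deriv Efam = fun ρ => 4 * ρ - 6 * ρ ^ 3 := by
  funext ρ
  rw [Efam_eq]
  refine HasDerivAt.deriv <|
    (((hasDerivAt_pow 2 ρ).const_mul 2).sub ((hasDerivAt_pow 4 ρ).const_mul (3 / 2))).congr_deriv ?_
  norm_num
  ring

theorem deriv_deriv_Efam (ρ : ℝ) : deriv (deriv Efam) ρ = 4 - 18 * ρ ^ 2 := by
  rw [deriv_Efam]
  refine HasDerivAt.deriv <|
    (((hasDerivAt_id ρ).const_mul 4).sub ((hasDerivAt_pow 3 ρ).const_mul 6)).congr_deriv ?_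
  norm_num
  ring

theorem Efam_le_Efam_sqrt_two_thirds (ρ : ℝ) : Efam ρ ≤ Efam (√(2 / 3)) := by
  have hs : √(2 / 3) ^ 2 = 2 / 3 := sq_sqrt (by norm_num)
  have hs4 : √(2 / 3) ^ 4 = (2 / 3) ^ 2 := by rw [show 4 = 2 * 2 from rfl, pow_mul, hs]
  simp only [Efam_eq, hs, hs4]
  nlinarith [sq_nonneg (ρ ^ 2 - 2 / 3)]

theorem Upp_neg_of_sqrt_two_thirds_lt {ρ : ℝ} (hρ : √(2 / 3) < ρ) : Upp ρ < 0 := by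
  have hρ0 : 0 < ρ := (sqrt_nonneg _).trans_lt hρ
  have hρ2 : 2 / 3 < ρ ^ 2 := (sqrt_lt' hρ0).mp hρ
  rw [Upp_eq hρ0.ne']
  linarith

theorem Upp_pos_of_lt_sqrt_two_thirds {ρ : ℝ} (hρ0 : 0 < ρ) (hρ : ρ < √(2 / 3)) :
    0 < Upp ρ := by
  have hρ2 : ρ ^ 2 < 2 / 3 := (lt_sqrt hρ0.le).mp hρ
  rw [Upp_eq hρ0.ne']
  linarith

end Stmt7

/-- along the family of relative equilibria of the axisymmetric volcano
system, `ρ = √(2/3)` is a critical point of the energy `E(ρ)` and a nondegenerate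
maximum; for `ρ ∈ (√(2/3), 1]` the linearization `[[0,1],[−U_μ''(ρ),0]]` of the reduced
`(r,p_r)` dynamics has a positive real eigenvalue (hyperbolic), while for
`ρ ∈ (0, √(2/3))` all its (complex) eigenvalues are purely imaginary (elliptic). -/
theorem statement7 :
    deriv Efam (Real.sqrt (2 / 3)) = 0 ∧
    deriv (deriv Efam) (Real.sqrt (2 / 3)) < 0 ∧
    IsLocalMax Efam (Real.sqrt (2 / 3)) ∧
    (∀ ρ : ℝ, Real.sqrt (2 / 3) < ρ → ρ ≤ 1 →
      ∃ lam : ℝ, 0 < lam ∧ ∃ v : Fin 2 → ℝ, v ≠ 0 ∧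
        Matrix.mulVec !![0, 1; -Upp ρ, 0] v = lam • v) ∧
    (∀ ρ : ℝ, 0 < ρ → ρ < Real.sqrt (2 / 3) →
      ∀ lam : ℂ, (∃ v : Fin 2 → ℂ, v ≠ 0 ∧
        Matrix.mulVec !![(0 : ℂ), 1; (-Upp ρ : ℂ), 0] v = lam • v) → lam.re = 0) := by
  have hs : √(2 / 3) ^ 2 = 2 / 3 := sq_sqrt (by norm_num)
  refine ⟨?_, ?_, ?_, ?_, ?_⟩
  · rw [deriv_Efam]
    linear_combination (-6 * √(2 / 3)) * hs
  · rw [deriv_deriv_Efam, hs]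
    norm_num
  · exact IsMaxOn.isLocalMax (fun ρ _ => Efam_le_Efam_sqrt_two_thirds ρ) Filter.univ_mem
  · intro ρ hρ _
    have hU : 0 < -Upp ρ := neg_pos.mpr (Upp_neg_of_sqrt_two_thirds_lt hρ)
    refine ⟨√(-Upp ρ), sqrt_pos.mpr hU, ![1, √(-Upp ρ)], by simp, ?_⟩
    exact mulVec_oscillator_eq_smul_of_sq_eq (sq_sqrt hU.le)
  · rintro ρ hρ0 hρ lam ⟨v, hv, hmv⟩
    exact Complex.re_eq_zero_of_sq_eq_neg_ofReal (Upp_pos_of_lt_sqrt_two_thirds hρ0 hρ)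
      (sq_eq_neg_of_mulVec_oscillator_eq_smul hv hmv)
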